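/- Second moment bound for the regularized weight: Let ν be a Borel probability measure on ℝ^p × M with E_ν‖X‖² < ∞, covariate mean μ_ν and covariate covariance Σ_ν, and let x ∈ ℝ^p with ‖x − μ_ν‖_{Σ_ν} < ∞. Then for every λ ≥ 0, E_ν[ w^λ_ν(X,x)² ] ≤ 2·( 1 + p·‖x − μ_ν‖²_{Σ_ν} ). -/

import Mathlib

open MeasureTheory Matrix Filter
open scoped ENNReal NNReal Topology Classical

noncomputable section

namespace FrechetPCR

/-- The four Penrose conditions characterizing the Moore–Penrose pseudoinverse. -/
def IsMoorePenrose {n m : ℕ} (A : Matrix (Fin n) (Fin m) ℝ) (B : Matrix (Fin m) (Fin n) ℝ) : Prop :=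
  A * B * A = A ∧ B * A * B = B ∧ (A * B)ᵀ = A * B ∧ (B * A)ᵀ = B * A

/-- The Moore–Penrose pseudoinverse of a real matrix (it exists and is unique). -/
def pinv {n m : ℕ} (A : Matrix (Fin n) (Fin m) ℝ) : Matrix (Fin m) (Fin n) ℝ :=
  if h : ∃ B, IsMoorePenrose A B then h.choose else 0

/-- Spectral projection of a symmetric matrix onto the span of eigenvectors
with eigenvalue > t. -/
def specProjGT {m : ℕ} (S : Matrix (Fin m) (Fin m) ℝ) (t : ℝ) : Matrix (Fin m) (Fin m) ℝ :=
  if hS : S.IsHermitian then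
    (hS.eigenvectorUnitary : Matrix (Fin m) (Fin m) ℝ) *
      Matrix.diagonal (fun i => if t < hS.eigenvalues i then (1 : ℝ) else 0) *
      star (hS.eigenvectorUnitary : Matrix (Fin m) (Fin m) ℝ)
  else 0

/-- Hard singular value thresholding: retains the part of `A` corresponding to
singular values exceeding `l` (for `l ≥ 0`): if `A = Σ sᵢ uᵢ vᵢᵀ` is an SVD then
`SVT l A = Σ sᵢ 1{sᵢ > l} uᵢ vᵢᵀ = A · Π` where `Π` is the spectral projection of
`AᵀA` onto eigenvalues `> l²`. -/
def SVT {n m : ℕ} (l : ℝ) (A : Matrix (Fin n) (Fin m) ℝ) : Matrix (Fin n) (Fin m) ℝ :=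
  A * specProjGT (Aᵀ * A) (l ^ 2)

/-- Mahalanobis seminorm of `v` induced by the positive semidefinite matrix `S`. -/
def mahal {p : ℕ} (S : Matrix (Fin p) (Fin p) ℝ) (v : Fin p → ℝ) : ℝ :=
  Real.sqrt (v ⬝ᵥ pinv S *ᵥ v)

/-- Euclidean (ℓ²) norm of a vector. -/
def euclNorm {n : ℕ} (v : Fin n → ℝ) : ℝ :=
  Real.sqrt (∑ i, v i ^ 2)

/-- Spectral (ℓ²-operator) norm of a matrix. -/
def spectralNorm {n m : ℕ} (A : Matrix (Fin n) (Fin m) ℝ) : ℝ :=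
  ‖(Matrix.toEuclideanLin A).toContinuousLinearMap‖

/-- `σ^λ(A)`: the smallest singular value of `A` exceeding `l`
(with junk value `sInf ∅ = 0` when no singular value exceeds `l`). -/
def sigmaGT {n m : ℕ} (A : Matrix (Fin n) (Fin m) ℝ) (l : ℝ) : ℝ :=
  sInf {s : ℝ | 0 ≤ s ∧ l < s ∧ s ^ 2 ∈ spectrum ℝ (Aᵀ * A)}

/-- Covariate mean of a measure on ℝ^p × M. -/
def covMean {p : ℕ} {M : Type*} [MeasurableSpace M] (ν : Measure ((Fin p → ℝ) × M)) :
    Fin p → ℝ :=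
  ∫ z, z.1 ∂ν

/-- Covariate covariance of a measure on ℝ^p × M. -/
def covCov {p : ℕ} {M : Type*} [MeasurableSpace M] (ν : Measure ((Fin p → ℝ) × M)) :
    Matrix (Fin p) (Fin p) ℝ :=
  Matrix.of fun i j => ∫ z, (z.1 i - covMean ν i) * (z.1 j - covMean ν j) ∂ν

/-- λ-regularized weight function
`w^λ_ν(x',x) = 1 + (x'−μ_ν)ᵀ [SVT_λ(Σ_ν)]† (x−μ_ν)`. -/
def weight {p : ℕ} {M : Type*} [MeasurableSpace M] (l : ℝ) (ν : Measure ((Fin p → ℝ) × M))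
    (x' x : Fin p → ℝ) : ℝ :=
  1 + (x' - covMean ν) ⬝ᵥ pinv (SVT l (covCov ν)) *ᵥ (x - covMean ν)

/-- λ-regularized Fréchet risk `R^λ_ν(y;x) = E_ν[ w^λ_ν(X,x) · d²(Y,y) ]`. -/
def risk {p : ℕ} {M : Type*} [MetricSpace M] [MeasurableSpace M] (l : ℝ)
    (ν : Measure ((Fin p → ℝ) × M)) (y : M) (x : Fin p → ℝ) : ℝ :=
  ∫ z, weight l ν z.1 x * dist z.2 y ^ 2 ∂ν

/-- Empirical measure of a finite dataset. -/
def empOf {E : Type*} [MeasurableSpace E] {n : ℕ} (D : Fin n → E) : Measure E :=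
  (n : ℝ≥0∞)⁻¹ • ∑ i, Measure.dirac (D i)

/-- Empirical measure of the first `n` elements of a sequence of observations. -/
def empSeq {E : Type*} [MeasurableSpace E] (D : ℕ → E) (n : ℕ) : Measure E :=
  (n : ℝ≥0∞)⁻¹ • ∑ i ∈ Finset.range n, Measure.dirac (D i)

/-- ε-covering number of a set in a metric space: the minimal cardinality of a cover
by closed ε-balls (`⊤` if no finite cover exists). -/
def coveringNumber {M : Type*} [MetricSpace M] (S : Set M) (ε : ℝ) : ℝ≥0∞ :=
  ⨅ (t : Finset M) (_ : S ⊆ ⋃ y ∈ t, Metric.closedBall y ε), (t.card : ℝ≥0∞)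

/-- The n×n centering matrix `I − (1/n) 1ₙ 1ₙᵀ`. -/
def centering (n : ℕ) : Matrix (Fin n) (Fin n) ℝ :=
  1 - (n : ℝ)⁻¹ • Matrix.of fun _ _ => (1 : ℝ)

/-!
For positive semidefinite `Σ`, every matrix in the statement is a function of `Σ` in the
continuous functional calculus: `SVT_λ(Σ) = g(Σ)` with `g(s) = s · 1{s² > λ²}`, and
the pseudoinverse of `f(Σ)` is `(s ↦ (f s)⁻¹)(Σ)`. On the spectrum `s ≥ 0` one has
`g(s)⁻¹ s g(s)⁻¹ ≤ s⁻¹`, so `B Σ B ≤ Σ†` in the Loewner order, where `B = [SVT_λ(Σ)]†`.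
Writing the weight as `1 + U` with `U = ⟨X − μ, B v⟩` and `v = x − μ`, we get
`(1 + U)² ≤ 2 + 2U²` and `E U² = (B v)ᵀ Σ (B v) ≤ vᵀ Σ† v = ‖x − μ‖²_Σ`.
-/

theorem dotProduct_mul_dotProduct_eq_sum {ι R : Type*} [Fintype ι] [CommSemiring R]
    (y a b : ι → R) : (y ⬝ᵥ a) * (y ⬝ᵥ b) = ∑ i, ∑ j, a i * b j * (y i * y j) := by
  simp only [dotProduct, Finset.sum_mul_sum]
  exact Finset.sum_congr rfl fun i _ => Finset.sum_congr rfl fun j _ => by ring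

theorem mulVec_dotProduct_mulVec_mulVec {n R : Type*} [Fintype n] [CommSemiring R]
    (A S : Matrix n n R) (v w : n → R) :
    (A *ᵥ v) ⬝ᵥ S *ᵥ (A *ᵥ w) = v ⬝ᵥ (Aᵀ * S * A) *ᵥ w := by
  rw [← mulVec_mulVec, ← mulVec_mulVec, dotProduct_mulVec v, vecMul_transpose]

theorem IsMoorePenrose.unique {n m : ℕ} {A : Matrix (Fin n) (Fin m) ℝ}
    {B C : Matrix (Fin m) (Fin n) ℝ} (hB : IsMoorePenrose A B) (hC : IsMoorePenrose A C) :
    B = C := by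
  obtain ⟨hB1, hB2, hB3, hB4⟩ := hB
  obtain ⟨hC1, hC2, hC3, hC4⟩ := hC
  have hAB : A * B = A * C :=
    calc A * B = (A * B)ᵀ := hB3.symm
    _ = Bᵀ * (A * C * A)ᵀ := by rw [transpose_mul, hC1]
    _ = (A * B)ᵀ * (A * C)ᵀ := by simp only [transpose_mul, Matrix.mul_assoc]
    _ = A * B * A * C := by rw [hB3, hC3]; simp only [Matrix.mul_assoc]
    _ = A * C := by rw [hB1]
  have hBA : B * A = C * A :=
    calc B * A = B * (A * C * A) := by rw [hC1]
    _ = (B * A)ᵀ * (C * A)ᵀ := by rw [hB4, hC4]; simp only [Matrix.mul_assoc]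
    _ = (C * (A * B * A))ᵀ := by simp only [transpose_mul, Matrix.mul_assoc]
    _ = C * A := by rw [hB1, hC4]
  calc B = B * A * B := hB2.symm
  _ = C * A * C := by rw [Matrix.mul_assoc, hAB, ← Matrix.mul_assoc, hBA]
  _ = C := hC2

theorem pinv_eq_of_isMoorePenrose {n m : ℕ} {A : Matrix (Fin n) (Fin m) ℝ}
    {B : Matrix (Fin m) (Fin n) ℝ} (h : IsMoorePenrose A B) : pinv A = B := by
  have hex : ∃ B, IsMoorePenrose A B := ⟨B, h⟩
  rw [pinv, dif_pos hex]
  exact hex.choose_spec.unique h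

section FunctionalCalculus

variable {n : Type*} [Fintype n] [DecidableEq n]

theorem continuousOn_real_spectrum (S : Matrix n n ℝ) (f : ℝ → ℝ) :
    ContinuousOn f (spectrum ℝ S) :=
  S.finite_real_spectrum.continuousOn f

theorem cfc_mul_cfc (S : Matrix n n ℝ) (f g : ℝ → ℝ) :
    cfc f S * cfc g S = cfc (fun x => f x * g x) S :=
  (cfc_mul f g S (continuousOn_real_spectrum S f) (continuousOn_real_spectrum S g)).symm

theorem transpose_cfc (f : ℝ → ℝ) (S : Matrix n n ℝ) : (cfc f S)ᵀ = cfc f S :=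
  (isHermitian_iff_isSymm.mp (cfc_predicate f S)).eq

end FunctionalCalculus

section SpectralFormulas

variable {q : ℕ} {S : Matrix (Fin q) (Fin q) ℝ}

/- The convention `0⁻¹ = 0` makes `(f x)⁻¹` the pseudoinverse of the scalar `f x`. -/
theorem pinv_cfc (f : ℝ → ℝ) (S : Matrix (Fin q) (Fin q) ℝ) :
    pinv (cfc f S) = cfc (fun x => (f x)⁻¹) S := by
  have inv_mul_mul_inv (a : ℝ) : a⁻¹ * a * a⁻¹ = a⁻¹ := by
    simpa using mul_inv_mul_cancel a⁻¹
  refine pinv_eq_of_isMoorePenrose ⟨?_, ?_, ?_, ?_⟩ <;>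
    simp only [cfc_mul_cfc, transpose_cfc, mul_inv_mul_cancel, inv_mul_mul_inv]

theorem pinv_eq_cfc_inv (hS : S.IsHermitian) : pinv S = cfc (fun x : ℝ => x⁻¹) S := by
  simpa only [cfc_id' ℝ S hS.isSelfAdjoint] using pinv_cfc (fun x => x) S

theorem specProjGT_eq_cfc (hS : S.IsHermitian) (t : ℝ) :
    specProjGT S t = cfc (fun x => if t < x then (1 : ℝ) else 0) S := by
  rw [hS.cfc_eq, Matrix.IsHermitian.cfc, specProjGT, dif_pos hS]
  congr 3

theorem SVT_eq_cfc (hS : S.IsHermitian) (l : ℝ) :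
    SVT l S = cfc (fun x => if l ^ 2 < x ^ 2 then x else 0) S := by
  have hsq : Sᵀ * S = cfc (fun x : ℝ => x * x) S := by
    rw [(isHermitian_iff_isSymm.mp hS).eq, ← cfc_mul_cfc, cfc_id' ℝ S]
  rw [SVT, specProjGT_eq_cfc (hsq ▸ cfc_predicate _ S), hsq,
    ← cfc_comp (fun x => if l ^ 2 < x then (1 : ℝ) else 0) (fun x : ℝ => x * x) S
      hS.isSelfAdjoint ((S.finite_real_spectrum.image _).continuousOn _)
      (continuousOn_real_spectrum S _)]
  nth_rw 1 [← cfc_id' ℝ S]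
  rw [cfc_mul_cfc]
  congr 1
  ext x
  split_ifs <;> simp_all [sq]

end SpectralFormulas

section LoewnerOrder

open scoped MatrixOrder

theorem dotProduct_mulVec_le_of_le {n : Type*} [Fintype n] {A B : Matrix n n ℝ} (h : A ≤ B)
    (v : n → ℝ) : v ⬝ᵥ A *ᵥ v ≤ v ⬝ᵥ B *ᵥ v := by
  have := (Matrix.le_iff.mp h).dotProduct_mulVec_nonneg v
  rwa [star_trivial, sub_mulVec, dotProduct_sub, sub_nonneg] at this

variable {q : ℕ} {S : Matrix (Fin q) (Fin q) ℝ}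

theorem pinv_nonneg (hS : S.PosSemidef) : 0 ≤ pinv S := by
  rw [pinv_eq_cfc_inv hS.isHermitian]
  exact cfc_nonneg fun x hx => inv_nonneg.2 (spectrum_nonneg_of_nonneg hS.nonneg hx)

theorem pinv_SVT_mul_mul_pinv_SVT_le (hS : S.PosSemidef) (l : ℝ) :
    pinv (SVT l S) * S * pinv (SVT l S) ≤ pinv S := by
  rw [SVT_eq_cfc hS.isHermitian, pinv_cfc, pinv_eq_cfc_inv hS.isHermitian]
  nth_rw 2 [← cfc_id' ℝ S]
  rw [cfc_mul_cfc, cfc_mul_cfc]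
  refine cfc_mono (fun x hx => ?_) (continuousOn_real_spectrum S _)
    (continuousOn_real_spectrum S _)
  have hx : 0 ≤ x := spectrum_nonneg_of_nonneg hS.nonneg hx
  split_ifs
  · simpa using (mul_inv_mul_cancel x⁻¹).le
  · simpa using hx

theorem mulVec_pinv_SVT_dotProduct_le (hS : S.PosSemidef) (l : ℝ) (v : Fin q → ℝ) :
    (pinv (SVT l S) *ᵥ v) ⬝ᵥ S *ᵥ (pinv (SVT l S) *ᵥ v) ≤ v ⬝ᵥ pinv S *ᵥ v := by
  rw [mulVec_dotProduct_mulVec_mulVec, SVT_eq_cfc hS.isHermitian, pinv_cfc, transpose_cfc,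
    ← pinv_cfc, ← SVT_eq_cfc hS.isHermitian]
  exact dotProduct_mulVec_le_of_le (pinv_SVT_mul_mul_pinv_SVT_le hS l) v

theorem mahal_sq (hS : S.PosSemidef) (v : Fin q → ℝ) :
    mahal S v ^ 2 = v ⬝ᵥ pinv S *ᵥ v := by
  have := (pinv_nonneg hS).posSemidef.dotProduct_mulVec_nonneg v
  rw [star_trivial] at this
  exact Real.sq_sqrt this

end LoewnerOrder

section Covariance

variable {p : ℕ} {M : Type*} [MeasurableSpace M] {ν : Measure ((Fin p → ℝ) × M)}
  [IsFiniteMeasure ν]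

theorem memLp_two_sub_covMean (hX2 : Integrable (fun z => ‖z.1‖ ^ 2) ν) :
    MemLp (fun z => z.1 - covMean ν) 2 ν :=
  ((memLp_two_iff_integrable_sq_norm measurable_fst.aestronglyMeasurable).2 hX2).sub
    (memLp_const _)

theorem integrable_sub_covMean_mul (hX2 : Integrable (fun z => ‖z.1‖ ^ 2) ν)
    (i j : Fin p) :
    Integrable (fun z => (z.1 - covMean ν) i * (z.1 - covMean ν) j) ν :=
  ((memLp_two_sub_covMean hX2).eval i).integrable_mul ((memLp_two_sub_covMean hX2).eval j)

theorem integrable_dotProduct_mul_dotProduct (hX2 : Integrable (fun z => ‖z.1‖ ^ 2) ν)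
    (a b : Fin p → ℝ) :
    Integrable (fun z => ((z.1 - covMean ν) ⬝ᵥ a) * ((z.1 - covMean ν) ⬝ᵥ b)) ν := by
  simp only [dotProduct_mul_dotProduct_eq_sum]
  exact integrable_finsetSum _ fun i _ => integrable_finsetSum _ fun j _ =>
    (integrable_sub_covMean_mul hX2 i j).const_mul _

theorem integral_dotProduct_mul_dotProduct (hX2 : Integrable (fun z => ‖z.1‖ ^ 2) ν)
    (a b : Fin p → ℝ) :
    ∫ z, ((z.1 - covMean ν) ⬝ᵥ a) * ((z.1 - covMean ν) ⬝ᵥ b) ∂ν = a ⬝ᵥ covCov ν *ᵥ b := by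
  simp only [dotProduct_mul_dotProduct_eq_sum]
  rw [← toLinearMap₂'_apply', toLinearMap₂'_apply, integral_finsetSum _ fun i _ =>
    integrable_finsetSum _ fun j _ => (integrable_sub_covMean_mul hX2 i j).const_mul _]
  refine Finset.sum_congr rfl fun i _ => ?_
  rw [integral_finsetSum _ fun j _ => (integrable_sub_covMean_mul hX2 i j).const_mul _]
  refine Finset.sum_congr rfl fun j _ => ?_
  rw [integral_const_mul, smul_eq_mul, smul_eq_mul, ← mul_assoc]
  rfl

theorem covCov_posSemidef (hX2 : Integrable (fun z => ‖z.1‖ ^ 2) ν) :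
    (covCov ν).PosSemidef := by
  refine .of_dotProduct_mulVec_nonneg ?_ fun a => ?_
  · ext i j
    simp only [conjTranspose_apply, star_trivial, covCov, of_apply, mul_comm]
  · rw [star_trivial, ← integral_dotProduct_mul_dotProduct hX2]
    exact integral_nonneg fun z => mul_self_nonneg _

end Covariance

theorem weight_second_moment_general
    {p : ℕ} {M : Type*} [MeasurableSpace M]
    (ν : Measure ((Fin p → ℝ) × M)) [IsProbabilityMeasure ν]
    (hX2 : Integrable (fun z => ‖z.1‖ ^ 2) ν)
    (x : Fin p → ℝ) (l : ℝ) :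
    ∫ z, weight l ν z.1 x ^ 2 ∂ν ≤
      2 * (1 + (p : ℝ) * mahal (covCov ν) (x - covMean ν) ^ 2) := by
  set v := x - covMean ν
  set w := pinv (SVT l (covCov ν)) *ᵥ v
  have hS := covCov_posSemidef hX2
  have hweight (z : (Fin p → ℝ) × M) : weight l ν z.1 x = 1 + (z.1 - covMean ν) ⬝ᵥ w := rfl
  have hu2 := integrable_dotProduct_mul_dotProduct hX2 w w
  calc ∫ z, weight l ν z.1 x ^ 2 ∂ν
      ≤ ∫ z, (2 + 2 * (((z.1 - covMean ν) ⬝ᵥ w) * ((z.1 - covMean ν) ⬝ᵥ w))) ∂ν :=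
        integral_mono_of_nonneg (ae_of_all _ fun z => sq_nonneg _)
          ((integrable_const 2).add (hu2.const_mul 2))
          (ae_of_all _ fun z => by
            dsimp only
            rw [hweight, ← sq]
            exact add_sq_le.trans_eq (by ring))
    _ = 2 + 2 * (w ⬝ᵥ covCov ν *ᵥ w) := by
        rw [integral_add (integrable_const 2) (hu2.const_mul 2), integral_const_mul,
          integral_dotProduct_mul_dotProduct hX2]
        simp
    _ ≤ 2 + 2 * (v ⬝ᵥ pinv (covCov ν) *ᵥ v) := by
        gcongr
        exact mulVec_pinv_SVT_dotProduct_le hS l v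
    _ ≤ 2 * (1 + p * mahal (covCov ν) v ^ 2) := by
        have hv := sq_nonneg (mahal (covCov ν) v)
        rw [mahal_sq hS] at hv ⊢
        rcases Nat.eq_zero_or_pos p with rfl | hp
        · simp [dotProduct]
        · nlinarith [(Nat.one_le_cast (α := ℝ)).2 hp]

/-- **Second moment bound for the regularized weight** (eq. (C.14)). -/
theorem weight_second_moment
    {p : ℕ} {M : Type*} [MetricSpace M] [MeasurableSpace M]
    (ν : Measure ((Fin p → ℝ) × M)) [IsProbabilityMeasure ν]
    (hX2 : Integrable (fun z => ‖z.1‖ ^ 2) ν)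
    (x : Fin p → ℝ) (l : ℝ) (hl : 0 ≤ l) :
    ∫ z, weight l ν z.1 x ^ 2 ∂ν ≤
      2 * (1 + (p : ℝ) * mahal (covCov ν) (x - covMean ν) ^ 2) :=
  weight_second_moment_general ν hX2 x l

end FrechetPCR
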